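/- Let u_0, u_1, v_0, v_1 : ℝ² → ℝ be smooth functions of (x,y) with u_0 nonvanishing, satisfying the m = 1 truncated Volterra system: ∂_y u_0 = u_0(v_1 - v_0), ∂_y u_1 = -u_1 v_1, ∂_x v_0 = v_0 u_0, ∂_x v_1 = v_1(u_1 - u_0). Define V_0 := -(1/2)((∂_x u_0)/u_0 + u_0 + u_1). Then ∂_y V_0 = u_0 v_0, and consequently -∂_x² v_0 + ∂_y(V_0²) + ∂_x(2u_0 v_0) = -u_0 v_0 u_1. -/

import Mathlib

noncomputable section

/-- `∂/∂x` for a function of `(x, y)`. -/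
def dx2 (f : ℝ → ℝ → ℝ) : ℝ → ℝ → ℝ := fun x y => deriv (fun s => f s y) x

/-- `∂/∂y` for a function of `(x, y)`. -/
def dy2 (f : ℝ → ℝ → ℝ) : ℝ → ℝ → ℝ := fun x y => deriv (fun s => f x s) y


lemma slice_x (f : ℝ → ℝ → ℝ) (hf : ContDiff ℝ (⊤ : ℕ∞) ↿f) (x y : ℝ) :
    HasDerivAt (fun s => f s y) (fderiv ℝ ↿f (x, y) (1, 0)) x := by
  have h := (hf.differentiable (by simp) (x, y)).hasFDerivAt
  have hl : HasDerivAt (fun s : ℝ => ((s, y) : ℝ × ℝ)) (1, 0) x :=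
    HasDerivAt.prodMk (hasDerivAt_id x) (hasDerivAt_const x y)
  exact h.comp_hasDerivAt x hl

lemma slice_y (f : ℝ → ℝ → ℝ) (hf : ContDiff ℝ (⊤ : ℕ∞) ↿f) (x y : ℝ) :
    HasDerivAt (fun t => f x t) (fderiv ℝ ↿f (x, y) (0, 1)) y := by
  have h := (hf.differentiable (by simp) (x, y)).hasFDerivAt
  have hl : HasDerivAt (fun t : ℝ => ((x, t) : ℝ × ℝ)) (0, 1) y :=
    HasDerivAt.prodMk (hasDerivAt_const y x) (hasDerivAt_id y)
  exact h.comp_hasDerivAt y hl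

lemma dx2_eq (f : ℝ → ℝ → ℝ) (hf : ContDiff ℝ (⊤ : ℕ∞) ↿f) (x y : ℝ) :
    dx2 f x y = fderiv ℝ ↿f (x, y) (1, 0) := (slice_x f hf x y).deriv

lemma dy2_eq (f : ℝ → ℝ → ℝ) (hf : ContDiff ℝ (⊤ : ℕ∞) ↿f) (x y : ℝ) :
    dy2 f x y = fderiv ℝ ↿f (x, y) (0, 1) := (slice_y f hf x y).deriv

lemma hasDerivAt_dx2_slice_y (f : ℝ → ℝ → ℝ) (hf : ContDiff ℝ (⊤ : ℕ∞) ↿f) (x y : ℝ) :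
    HasDerivAt (fun t => dx2 f x t) (dx2 (dy2 f) x y) y := by
  set F' := fderiv ℝ ↿f with hF'def
  have hF' : ContDiff ℝ (⊤ : ℕ∞) F' := hf.fderiv_right (by simp)
  have hdF : ∀ p, HasFDerivAt ↿f (F' p) p := fun p => (hf.differentiable (by simp) p).hasFDerivAt
  have hdF' : HasFDerivAt F' (fderiv ℝ F' (x, y)) (x, y) :=
    (hF'.differentiable (by simp) _).hasFDerivAt
  have hsym := second_derivative_symmetric hdF hdF' ((0:ℝ), (1:ℝ)) ((1:ℝ), (0:ℝ))
  -- derivative of t ↦ F' (x, t)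
  have hl : HasDerivAt (fun t : ℝ => ((x, t) : ℝ × ℝ)) (0, 1) y :=
    HasDerivAt.prodMk (hasDerivAt_const y x) (hasDerivAt_id y)
  have h1 : HasDerivAt (fun t => F' (x, t)) (fderiv ℝ F' (x, y) (0, 1)) y :=
    hdF'.comp_hasDerivAt y hl
  have h2 : HasDerivAt (fun t => F' (x, t) ((1:ℝ), (0:ℝ)))
      (fderiv ℝ F' (x, y) (0, 1) (1, 0)) y := by
    have := h1.clm_apply (hasDerivAt_const y ((1:ℝ), (0:ℝ)))
    simpa using this
  -- identify dx2 (dy2 f) x y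
  have hval : dx2 (dy2 f) x y = fderiv ℝ F' (x, y) (0, 1) (1, 0) := by
    have hg : (fun s => dy2 f s y) = fun s => F' (s, y) ((0:ℝ), (1:ℝ)) := by
      funext s; exact dy2_eq f hf s y
    have hl' : HasDerivAt (fun s : ℝ => ((s, y) : ℝ × ℝ)) (1, 0) x :=
      HasDerivAt.prodMk (hasDerivAt_id x) (hasDerivAt_const x y)
    have h1' : HasDerivAt (fun s => F' (s, y)) (fderiv ℝ F' (x, y) (1, 0)) x :=
      hdF'.comp_hasDerivAt x hl'
    have h2' : HasDerivAt (fun s => F' (s, y) ((0:ℝ), (1:ℝ)))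
        (fderiv ℝ F' (x, y) (1, 0) (0, 1)) x := by
      have := h1'.clm_apply (hasDerivAt_const x ((0:ℝ), (1:ℝ)))
      simpa using this
    show deriv (fun s => dy2 f s y) x = _
    rw [hg, h2'.deriv, hsym]
  rw [hval]
  have hg2 : (fun t => dx2 f x t) = fun t => F' (x, t) ((1:ℝ), (0:ℝ)) := by
    funext t; exact dx2_eq f hf x t
  rw [hg2]
  exact h2

/-- For smooth solutions of the `m = 1` truncated Volterra system
`u₀_y = u₀(v₁ - v₀)`, `u₁_y = -u₁v₁`, `v₀ₓ = v₀u₀`, `v₁ₓ = v₁(u₁ - u₀)`, with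
`u₀` nonvanishing, the nonlocality `V₀ = -(1/2)(u₀ₓ/u₀ + u₀ + u₁)` satisfies
`V₀_y = u₀v₀`, and consequently
`-v₀ₓₓ + (V₀²)_y + (2u₀v₀)ₓ = -u₀v₀u₁`. -/
theorem stmt19
    (u₀ u₁ v₀ v₁ : ℝ → ℝ → ℝ)
    (hu₀ : ContDiff ℝ (⊤ : ℕ∞) ↿u₀) (hu₁ : ContDiff ℝ (⊤ : ℕ∞) ↿u₁)
    (hv₀ : ContDiff ℝ (⊤ : ℕ∞) ↿v₀) (hv₁ : ContDiff ℝ (⊤ : ℕ∞) ↿v₁)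
    (hne : ∀ x y, u₀ x y ≠ 0)
    (h1 : ∀ x y, dy2 u₀ x y = u₀ x y * (v₁ x y - v₀ x y))
    (h2 : ∀ x y, dy2 u₁ x y = -(u₁ x y * v₁ x y))
    (h3 : ∀ x y, dx2 v₀ x y = v₀ x y * u₀ x y)
    (h4 : ∀ x y, dx2 v₁ x y = v₁ x y * (u₁ x y - u₀ x y))
    (V₀ : ℝ → ℝ → ℝ)
    (hV₀ : ∀ x y, V₀ x y = -(1 / 2) * (dx2 u₀ x y / u₀ x y + u₀ x y + u₁ x y)) :
    (∀ x y, dy2 V₀ x y = u₀ x y * v₀ x y) ∧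
    (∀ x y, -(dx2 (dx2 v₀) x y)
        + dy2 (fun x y => (V₀ x y) ^ 2) x y
        + dx2 (fun x y => 2 * u₀ x y * v₀ x y) x y
      = -(u₀ x y * v₀ x y * u₁ x y)) := by
  -- basic slice derivatives
  have hAx : ∀ x y, HasDerivAt (fun s => u₀ s y) (dx2 u₀ x y) x :=
    fun x y => (slice_x u₀ hu₀ x y).differentiableAt.hasDerivAt
  have hCx : ∀ x y, HasDerivAt (fun s => v₀ s y) (v₀ x y * u₀ x y) x := by
    intro x y
    have := (slice_x v₀ hv₀ x y).differentiableAt.hasDerivAt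
    rwa [show deriv (fun s => v₀ s y) x = v₀ x y * u₀ x y from h3 x y] at this
  have hDx : ∀ x y, HasDerivAt (fun s => v₁ s y) (v₁ x y * (u₁ x y - u₀ x y)) x := by
    intro x y
    have := (slice_x v₁ hv₁ x y).differentiableAt.hasDerivAt
    rwa [show deriv (fun s => v₁ s y) x = v₁ x y * (u₁ x y - u₀ x y) from h4 x y] at this
  have hAy : ∀ x y, HasDerivAt (fun t => u₀ x t) (u₀ x y * (v₁ x y - v₀ x y)) y := by
    intro x y
    have := (slice_y u₀ hu₀ x y).differentiableAt.hasDerivAt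
    rwa [show deriv (fun t => u₀ x t) y = u₀ x y * (v₁ x y - v₀ x y) from h1 x y] at this
  have hBy : ∀ x y, HasDerivAt (fun t => u₁ x t) (-(u₁ x y * v₁ x y)) y := by
    intro x y
    have := (slice_y u₁ hu₁ x y).differentiableAt.hasDerivAt
    rwa [show deriv (fun t => u₁ x t) y = -(u₁ x y * v₁ x y) from h2 x y] at this
  -- mixed second derivative of u₀
  have hgy : ∀ x y, dx2 (dy2 u₀) x y
      = dx2 u₀ x y * (v₁ x y - v₀ x y)
        + u₀ x y * (v₁ x y * (u₁ x y - u₀ x y) - v₀ x y * u₀ x y) := by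
    intro x y
    have hfun : dy2 u₀ = fun x y => u₀ x y * (v₁ x y - v₀ x y) := funext₂ h1
    rw [hfun]
    exact ((hAx x y).mul ((hDx x y).sub (hCx x y))).deriv
  have hg : ∀ x y, HasDerivAt (fun t => dx2 u₀ x t)
      (dx2 u₀ x y * (v₁ x y - v₀ x y)
        + u₀ x y * (v₁ x y * (u₁ x y - u₀ x y) - v₀ x y * u₀ x y)) y := by
    intro x y
    have := hasDerivAt_dx2_slice_y u₀ hu₀ x y
    rwa [hgy x y] at this
  -- derivative of V₀ in y
  have key : ∀ x y, HasDerivAt (fun t => V₀ x t) (u₀ x y * v₀ x y) y := by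
    intro x y
    have hfun : (fun t => V₀ x t)
        = (fun t => -(1/2 : ℝ) * (dx2 u₀ x t / u₀ x t + u₀ x t + u₁ x t)) :=
      funext fun t => hV₀ x t
    rw [hfun]
    have hq := (hg x y).div (hAy x y) (hne x y)
    have h := (((hq.add (hAy x y)).add (hBy x y)).const_mul (-(1/2 : ℝ)))
    refine h.congr_deriv ?_
    have := hne x y
    field_simp
    ring
  refine ⟨fun x y => (key x y).deriv, fun x y => ?_⟩
  -- term 1 : v₀ₓₓ
  have ht1 : dx2 (dx2 v₀) x y
      = v₀ x y * u₀ x y * u₀ x y + v₀ x y * dx2 u₀ x y := by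
    have hfun : dx2 v₀ = fun x y => v₀ x y * u₀ x y := funext₂ h3
    rw [hfun]
    exact ((hCx x y).mul (hAx x y)).deriv
  -- term 2 : (V₀²)_y
  have ht2 : dy2 (fun x y => (V₀ x y) ^ 2) x y
      = 2 * V₀ x y * (u₀ x y * v₀ x y) := by
    have := ((key x y).pow 2).deriv
    simpa [dy2, Pi.pow_def] using this
  -- term 3 : (2 u₀ v₀)ₓ
  have ht3 : dx2 (fun x y => 2 * u₀ x y * v₀ x y) x y
      = 2 * dx2 u₀ x y * v₀ x y + 2 * u₀ x y * (v₀ x y * u₀ x y) := by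
    have := (((hAx x y).const_mul (2:ℝ)).mul (hCx x y)).deriv
    simpa [dx2, Pi.mul_def, mul_comm, mul_assoc, mul_left_comm] using this
  rw [ht1, ht2, ht3, hV₀ x y]
  have := hne x y
  field_simp
  ring
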